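/- arXiv:1308.2648 — 3 statements merged into one kernel-verified Lean document; each statement's English description precedes it below -/
import Mathlib

section
/- Let H be a real Hilbert space and 1 ≤ p ≤ 2. There exists a constant N, depending only on p, such that for all x, y ∈ H one has ‖x+y‖^p − ‖x‖^p − p·‖x‖^(p−2)·⟨x, y⟩ ≤ N·‖y‖^p, where the term ‖x‖^(p−2)·⟨x, y⟩ is interpreted as 0 when x = 0. -/
/-!
If `‖y‖ < ‖x‖`, write `‖x + y‖ ^ p = (‖x‖ ^ 2 + 2⟪x, y⟫ + ‖y‖ ^ 2) ^ (p / 2)`; the tangent line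
of the concave function `t ↦ t ^ (p / 2)` at `‖x‖ ^ 2` bounds the left-hand side by
`(p / 2) ‖x‖ ^ (p - 2) ‖y‖ ^ 2 ≤ (p / 2) ‖y‖ ^ p`. If `‖x‖ ≤ ‖y‖`, the terms are bounded separately:
`‖x + y‖ ^ p ≤ 2 ^ p ‖y‖ ^ p`, and by Cauchy–Schwarz and `p ≥ 1`,
`|‖x‖ ^ (p - 2) ⟪x, y⟫| ≤ ‖x‖ ^ (p - 1) ‖y‖ ≤ ‖y‖ ^ p`. Hence `N = 2 ^ p + p` works.
-/

open RealInnerProductSpace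

universe u

namespace Real

theorem rpow_le_rpow_add_mul_rpow_sub_one_mul_sub {q a b : ℝ} (hq0 : 0 ≤ q) (hq1 : q ≤ 1)
    (ha : 0 < a) (hb : 0 ≤ b) : b ^ q ≤ a ^ q + q * a ^ (q - 1) * (b - a) := by
  have bernoulli := rpow_one_add_le_one_add_mul_self (s := b / a - 1)
    (by linarith [div_nonneg hb ha.le]) hq0 hq1
  rw [add_sub_cancel, div_rpow hb ha.le, div_le_iff₀ (rpow_pos_of_pos ha q)] at bernoulli
  calc b ^ q ≤ (1 + q * (b / a - 1)) * a ^ q := bernoulli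
    _ = a ^ q + q * (a ^ q / a) * (b - a) := by field_simp
    _ = a ^ q + q * a ^ (q - 1) * (b - a) := by rw [rpow_sub_one ha.ne']

theorem sq_rpow_div_two {t : ℝ} (ht : 0 ≤ t) (p : ℝ) : (t ^ 2) ^ (p / 2) = t ^ p := by
  rw [← rpow_natCast_mul ht]
  congr 1
  push_cast
  ring

theorem rpow_sub_two_mul_sq_le {p a b : ℝ} (hp0 : 0 < p) (hp2 : p ≤ 2) (hb : 0 ≤ b)
    (hba : b ≤ a) : a ^ (p - 2) * b ^ 2 ≤ b ^ p := by
  rcases hb.eq_or_lt with rfl | hb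
  · simp [zero_rpow hp0.ne']
  calc a ^ (p - 2) * b ^ 2 ≤ b ^ (p - 2) * b ^ 2 :=
        mul_le_mul_of_nonneg_right (rpow_le_rpow_of_nonpos hb hba (by linarith)) (sq_nonneg b)
    _ = b ^ p := by
        rw [← rpow_natCast b 2, ← rpow_add hb]
        norm_num

end Real

section InnerProductSpace

variable {H : Type*} [NormedAddCommGroup H] [InnerProductSpace ℝ H]

theorem norm_add_rpow_sub_le_of_ne_zero {p : ℝ} (hp0 : 0 ≤ p) (hp2 : p ≤ 2) {x : H}
    (hx : x ≠ 0) (y : H) :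
    ‖x + y‖ ^ p - ‖x‖ ^ p - p * ‖x‖ ^ (p - 2) * ⟪x, y⟫ ≤ p / 2 * ‖x‖ ^ (p - 2) * ‖y‖ ^ 2 := by
  have tangent := Real.rpow_le_rpow_add_mul_rpow_sub_one_mul_sub (q := p / 2) (by linarith)
    (by linarith) (by positivity : 0 < ‖x‖ ^ 2) (sq_nonneg ‖x + y‖)
  have hexp : ‖x‖ ^ (p - 2) = (‖x‖ ^ 2) ^ (p / 2 - 1) := by
    rw [← Real.sq_rpow_div_two (norm_nonneg x)]
    congr 1
    ring
  rw [Real.sq_rpow_div_two (norm_nonneg _), Real.sq_rpow_div_two (norm_nonneg _),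
    ← hexp, norm_add_sq_real] at tangent
  linarith

theorem abs_rpow_sub_two_mul_inner_le (p : ℝ) (x y : H) :
    |‖x‖ ^ (p - 2) * ⟪x, y⟫| ≤ ‖x‖ ^ (p - 1) * ‖y‖ := by
  rcases eq_or_ne x 0 with rfl | hx
  · simp only [inner_zero_left, mul_zero, abs_zero]
    positivity
  have hx := norm_pos_iff.2 hx
  calc |‖x‖ ^ (p - 2) * ⟪x, y⟫| = ‖x‖ ^ (p - 2) * |⟪x, y⟫| := by
        rw [abs_mul, abs_of_pos (Real.rpow_pos_of_pos hx _)]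
    _ ≤ ‖x‖ ^ (p - 2) * (‖x‖ * ‖y‖) := by gcongr; exact abs_real_inner_le_norm x y
    _ = ‖x‖ ^ (p - 1) * ‖y‖ := by
        rw [← mul_assoc, ← Real.rpow_add_one hx.ne']
        ring_nf

theorem norm_add_rpow_sub_le_of_norm_le {p : ℝ} (hp1 : 1 ≤ p) {x y : H} (hxy : ‖x‖ ≤ ‖y‖) :
    ‖x + y‖ ^ p - ‖x‖ ^ p - p * ‖x‖ ^ (p - 2) * ⟪x, y⟫ ≤ (2 ^ p + p) * ‖y‖ ^ p := by
  have hp0 : 0 ≤ p := by linarith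
  have hsum : ‖x + y‖ ^ p ≤ 2 ^ p * ‖y‖ ^ p := by
    rw [← Real.mul_rpow zero_le_two (norm_nonneg y)]
    gcongr
    linarith [norm_add_le x y]
  have hinner : -(‖x‖ ^ (p - 2) * ⟪x, y⟫) ≤ ‖y‖ ^ p :=
    calc -(‖x‖ ^ (p - 2) * ⟪x, y⟫) ≤ ‖x‖ ^ (p - 1) * ‖y‖ :=
          (neg_le_abs _).trans (abs_rpow_sub_two_mul_inner_le p x y)
      _ ≤ ‖y‖ ^ (p - 1) * ‖y‖ := by gcongr
      _ = ‖y‖ ^ p := by rw [← Real.rpow_add_one' (norm_nonneg y) (by linarith), sub_add_cancel]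
  have hinner_p := mul_le_mul_of_nonneg_left hinner hp0
  have hxp : 0 ≤ ‖x‖ ^ p := by positivity
  linarith

theorem norm_add_rpow_sub_le_of_norm_lt {p : ℝ} (hp0 : 0 < p) (hp2 : p ≤ 2) {x y : H}
    (hyx : ‖y‖ < ‖x‖) :
    ‖x + y‖ ^ p - ‖x‖ ^ p - p * ‖x‖ ^ (p - 2) * ⟪x, y⟫ ≤ p / 2 * ‖y‖ ^ p := by
  have hx : x ≠ 0 := norm_pos_iff.1 ((norm_nonneg y).trans_lt hyx)
  calc _ ≤ p / 2 * ‖x‖ ^ (p - 2) * ‖y‖ ^ 2 := norm_add_rpow_sub_le_of_ne_zero hp0.le hp2 hx y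
    _ = p / 2 * (‖x‖ ^ (p - 2) * ‖y‖ ^ 2) := mul_assoc _ _ _
    _ ≤ p / 2 * ‖y‖ ^ p := by
        gcongr
        exact Real.rpow_sub_two_mul_sq_le hp0 hp2 (norm_nonneg y) hyx.le

end InnerProductSpace

/-- Let `1 ≤ p ≤ 2`. There is a constant `N`, depending only on `p`, such that for every real
Hilbert space `H` and all `x, y ∈ H` one has
`‖x+y‖^p − ‖x‖^p − p·‖x‖^(p−2)·⟪x, y⟫ ≤ N·‖y‖^p`. (When `x = 0` the inner-product term
vanishes, since `⟪0, y⟫ = 0`, in accordance with the convention that it is `0` there.) -/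
theorem rpow_norm_taylor_upper (p : ℝ) (hp1 : 1 ≤ p) (hp2 : p ≤ 2) :
    ∃ N : ℝ, ∀ (H : Type u) [NormedAddCommGroup H] [InnerProductSpace ℝ H]
      [CompleteSpace H], ∀ x y : H,
      ‖x + y‖ ^ p - ‖x‖ ^ p - p * ‖x‖ ^ (p - 2) * ⟪x, y⟫ ≤ N * ‖y‖ ^ p := by
  refine ⟨2 ^ p + p, fun H _ _ _ x y => ?_⟩
  rcases le_or_gt ‖x‖ ‖y‖ with hxy | hyx
  · exact norm_add_rpow_sub_le_of_norm_le hp1 hxy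
  calc _ ≤ p / 2 * ‖y‖ ^ p := norm_add_rpow_sub_le_of_norm_lt (by linarith) hp2 hyx
    _ ≤ (2 ^ p + p) * ‖y‖ ^ p := by
        gcongr
        linarith [Real.rpow_pos_of_pos two_pos p]
end

section
/- Let H be a real Hilbert space and p > 2. There exists a constant N, depending only on p, such that for all x, y ∈ H one has ‖x+y‖^p − ‖x‖^p − p·‖x‖^(p−2)·⟨x, y⟩ ≤ N·(‖x‖^(p−2)·‖y‖² + ‖y‖^p), where the term ‖x‖^(p−2)·⟨x, y⟩ is interpreted as 0 when x = 0. -/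
open RealInnerProductSpace

universe u

/-!
Write `a = ‖x‖`, `b = ‖y‖`. If `a ≤ 2 b`, each term is crudely bounded by `b ^ p` or
`a ^ (p - 2) * b ^ 2`. Otherwise `‖x + y‖ ^ 2 = a ^ 2 * (1 + h)` with `h = (2⟪x, y⟫ + b ^ 2) / a ^ 2`
in `[-1, 5/4]`, and the second-order bound `(1 + h) ^ (p / 2) ≤ 1 + (p / 2) h + C h ^ 2` leaves,
once its first-order term cancels `p a ^ (p - 2) ⟪x, y⟫`, a remainder of size `a ^ (p - 2) b ^ 2`.
The second-order bound follows from Bernoulli's inequality for exponents in `[1, 2]` and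
propagates to larger exponents by multiplying by `1 + h`.
-/
theorem one_add_rpow_le_of_le_two {q h : ℝ} (hq₁ : 1 ≤ q) (hq₂ : q ≤ 2) (hh : -1 ≤ h) :
    (1 + h) ^ q ≤ 1 + q * h + (q - 1) * h ^ 2 := by
  have hpos : 0 ≤ 1 + h := by linarith
  calc (1 + h) ^ q = (1 + h) ^ (q - 1) * (1 + h) := by
        rw [← Real.rpow_add_one' hpos (by linarith)]; ring_nf
    _ ≤ (1 + (q - 1) * h) * (1 + h) := by
        gcongr
        exact rpow_one_add_le_one_add_mul_self hh (by linarith) (by linarith)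
    _ = 1 + q * h + (q - 1) * h ^ 2 := by ring

theorem exists_one_add_rpow_le (M : ℝ) {q : ℝ} (hq : 1 ≤ q) :
    ∃ C, 0 ≤ C ∧ ∀ h, -1 ≤ h → h ≤ M → (1 + h) ^ q ≤ 1 + q * h + C * h ^ 2 := by
  suffices key : ∀ n : ℕ, ∀ q : ℝ, 1 ≤ q → q ≤ n + 2 →
      ∃ C, 0 ≤ C ∧ ∀ h, -1 ≤ h → h ≤ M → (1 + h) ^ q ≤ 1 + q * h + C * h ^ 2 by
    obtain ⟨n, hn⟩ := exists_nat_ge q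
    exact key n q hq (by linarith)
  intro n
  induction n with
  | zero =>
    intro q hq₁ hq₂
    exact ⟨q - 1, by linarith, fun h hh _ => one_add_rpow_le_of_le_two hq₁ (by simpa using hq₂) hh⟩
  | succ n ih =>
    intro q hq₁ hq₂
    rcases le_or_gt q 2 with hq₂' | hq₂'
    · exact ⟨q - 1, by linarith, fun h hh _ => one_add_rpow_le_of_le_two hq₁ hq₂' hh⟩
    obtain ⟨C, hC, hbound⟩ := ih (q - 1) (by linarith) (by push_cast at hq₂; linarith)
    refine ⟨q - 1 + C * (1 + |M|), by positivity, fun h hh₁ hh₂ => ?_⟩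
    have hpos : 0 ≤ 1 + h := by linarith
    have hcube : C * h ^ 2 * h ≤ C * h ^ 2 * |M| :=
      mul_le_mul_of_nonneg_left (hh₂.trans (le_abs_self M)) (by positivity)
    calc (1 + h) ^ q = (1 + h) ^ (q - 1) * (1 + h) := by
          rw [← Real.rpow_add_one' hpos (by linarith)]; ring_nf
      _ ≤ (1 + (q - 1) * h + C * h ^ 2) * (1 + h) := by gcongr; exact hbound h hh₁ hh₂
      _ ≤ 1 + q * h + (q - 1 + C * (1 + |M|)) * h ^ 2 := by nlinarith

theorem exists_rpow_le_add_mul_sq_sub_sq (M : ℝ) {p : ℝ} (hp : 2 ≤ p) :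
    ∃ C, 0 ≤ C ∧ ∀ a c : ℝ, 0 < a → 0 ≤ c → c ^ 2 ≤ (1 + M) * a ^ 2 →
      c ^ p ≤ a ^ p + p / 2 * a ^ (p - 2) * (c ^ 2 - a ^ 2) +
        C * a ^ (p - 4) * (c ^ 2 - a ^ 2) ^ 2 := by
  obtain ⟨C, hC, hbound⟩ := exists_one_add_rpow_le M (q := p / 2) (by linarith)
  refine ⟨C, hC, fun a c ha hc hca => ?_⟩
  have ha2 : 0 < a ^ 2 := by positivity
  set h := c ^ 2 / a ^ 2 - 1 with hh
  have hh₁ : -1 ≤ h := by rw [hh]; have := div_nonneg (sq_nonneg c) ha2.le; linarith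
  have hh₂ : h ≤ M := by rw [hh, sub_le_iff_le_add, div_le_iff₀ ha2]; linarith
  have sq_rpow : ∀ x : ℝ, 0 ≤ x → (x ^ 2) ^ (p / 2) = x ^ p := fun x hx => by
    rw [Real.rpow_div_two_eq_sqrt _ (sq_nonneg x), Real.sqrt_sq hx]
  have hc_eq : c ^ p = a ^ p * (1 + h) ^ (p / 2) := by
    rw [← sq_rpow c hc, ← sq_rpow a ha.le, ← Real.mul_rpow ha2.le (by linarith), hh]
    field_simp
    ring_nf
  have hsub : ∀ k : ℕ, a ^ (p - k) = a ^ p / a ^ k := fun k => by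
    rw [Real.rpow_sub ha, Real.rpow_natCast]
  calc c ^ p ≤ a ^ p * (1 + p / 2 * h + C * h ^ 2) := by
        rw [hc_eq]; gcongr; exact hbound h hh₁ hh₂
    _ = _ := by
        have h2 := hsub 2; have h4 := hsub 4; push_cast at h2 h4
        rw [h2, h4, hh]; field_simp

section InnerProductSpace

variable {H : Type*} [NormedAddCommGroup H] [InnerProductSpace ℝ H]

theorem norm_add_rpow_sub_le_of_norm_le_two_mul {p : ℝ} (hp : 0 ≤ p) {x y : H}
    (hxy : ‖x‖ ≤ 2 * ‖y‖) :
    ‖x + y‖ ^ p - ‖x‖ ^ p - p * ‖x‖ ^ (p - 2) * ⟪x, y⟫ ≤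
      3 ^ p * ‖y‖ ^ p + 2 * p * (‖x‖ ^ (p - 2) * ‖y‖ ^ 2) := by
  have hxy_sum : ‖x + y‖ ^ p ≤ 3 ^ p * ‖y‖ ^ p := by
    rw [← Real.mul_rpow (by norm_num) (norm_nonneg y)]
    gcongr
    linarith [norm_add_le x y]
  have hinner : -⟪x, y⟫ ≤ 2 * ‖y‖ ^ 2 := by
    nlinarith [neg_le_of_abs_le (abs_real_inner_le_norm x y), norm_nonneg y]
  have h_cross := mul_le_mul_of_nonneg_left hinner
    (mul_nonneg hp (Real.rpow_nonneg (norm_nonneg x) (p - 2)))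
  nlinarith [Real.rpow_nonneg (norm_nonneg x) p]

end InnerProductSpace

theorem exists_norm_add_rpow_sub_le_of_two_mul_norm_lt {p : ℝ} (hp : 2 ≤ p) :
    ∃ K, 0 ≤ K ∧ ∀ (H : Type u) [NormedAddCommGroup H] [InnerProductSpace ℝ H] (x y : H),
      2 * ‖y‖ < ‖x‖ →
      ‖x + y‖ ^ p - ‖x‖ ^ p - p * ‖x‖ ^ (p - 2) * ⟪x, y⟫ ≤ K * (‖x‖ ^ (p - 2) * ‖y‖ ^ 2) := by
  obtain ⟨C, hC, hbound⟩ := exists_rpow_le_add_mul_sq_sub_sq (5 / 4) hp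
  refine ⟨p / 2 + 25 / 4 * C, by positivity, fun H _ _ x y hxy => ?_⟩
  have hx : 0 < ‖x‖ := by linarith [norm_nonneg y]
  have hsq : ‖x + y‖ ^ 2 - ‖x‖ ^ 2 = 2 * ⟪x, y⟫ + ‖y‖ ^ 2 := by
    rw [norm_add_sq_real]; ring
  have hxy_sum : ‖x + y‖ ^ 2 ≤ (1 + 5 / 4) * ‖x‖ ^ 2 := by
    nlinarith [norm_add_le x y, norm_nonneg (x + y), norm_nonneg y]
  have hdiff : (2 * ⟪x, y⟫ + ‖y‖ ^ 2) ^ 2 ≤ 25 / 4 * (‖x‖ ^ 2 * ‖y‖ ^ 2) := by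
    obtain ⟨h₁, h₂⟩ := abs_le.mp (abs_real_inner_le_norm x y)
    have hy_sq : ‖y‖ ^ 2 ≤ ‖x‖ * ‖y‖ / 2 := by nlinarith [norm_nonneg y]
    nlinarith [norm_nonneg y, mul_nonneg hx.le (norm_nonneg y)]
  have hpow : ‖x‖ ^ (p - 2) = ‖x‖ ^ (p - 4) * ‖x‖ ^ 2 := by
    rw [← Real.rpow_natCast, ← Real.rpow_add hx]; ring_nf
  have hremainder := mul_le_mul_of_nonneg_left hdiff
    (mul_nonneg hC (Real.rpow_nonneg hx.le (p - 4)))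
  have h_taylor := hbound ‖x‖ ‖x + y‖ hx (norm_nonneg _) hxy_sum
  rw [hsq, hpow] at h_taylor
  rw [hpow]
  linear_combination h_taylor + hremainder

/-- Let `p > 2`. There is a constant `N`, depending only on `p`, such that for every real
Hilbert space `H` and all `x, y ∈ H`,
`‖x+y‖^p − ‖x‖^p − p·‖x‖^(p−2)·⟪x, y⟫ ≤ N·(‖x‖^(p−2)·‖y‖² + ‖y‖^p)`.
(When `x = 0` the inner-product term vanishes, since `⟪0, y⟫ = 0` and `0^(p−2) = 0`,
in accordance with the convention that it is interpreted as `0` there.) -/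
theorem rpow_norm_taylor_two_upper_split (p : ℝ) (hp : 2 < p) :
    ∃ N : ℝ, ∀ (H : Type u) [NormedAddCommGroup H] [InnerProductSpace ℝ H]
      [CompleteSpace H], ∀ x y : H,
      ‖x + y‖ ^ p - ‖x‖ ^ p - p * ‖x‖ ^ (p - 2) * ⟪x, y⟫ ≤
        N * (‖x‖ ^ (p - 2) * ‖y‖ ^ 2 + ‖y‖ ^ p) := by
  obtain ⟨K, hK, hK_bound⟩ := exists_norm_add_rpow_sub_le_of_two_mul_norm_lt hp.le
  refine ⟨3 ^ p + 2 * p + K, fun H _ _ _ x y => ?_⟩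
  have hX : 0 ≤ ‖x‖ ^ (p - 2) * ‖y‖ ^ 2 := by positivity
  have hY : 0 ≤ ‖y‖ ^ p := by positivity
  have h3p : 0 ≤ (3 : ℝ) ^ p := by positivity
  have hp₀ : 0 ≤ p := by linarith
  rcases le_or_gt ‖x‖ (2 * ‖y‖) with hxy | hxy
  · have h_large := norm_add_rpow_sub_le_of_norm_le_two_mul hp₀ hxy
    nlinarith [mul_nonneg h3p hX, mul_nonneg hK hX, mul_nonneg hK hY, mul_nonneg hp₀ hY]
  · have h_small := hK_bound H x y hxy
    nlinarith [mul_nonneg h3p hX, mul_nonneg h3p hY, mul_nonneg hK hY, mul_nonneg hp₀ hX]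
end

section
/- (Rosenthal's inequality.) Let p ≥ 2 be a real number. There exists a constant N, depending only on p, such that for every probability space (Ω, ℱ, P) and every finite sequence ξ_1, …, ξ_n of independent real random variables with E|ξ_k|^p < ∞ and E ξ_k = 0 for each k, one has E|ξ_1 + ⋯ + ξ_n|^p ≤ N · max( Σ_{k=1}^n E|ξ_k|^p , ( Σ_{k=1}^n E ξ_k² )^{p/2} ). -/
/-!
Let `S` be a partial sum and `ξ` the next summand, independent of `S`. A second-order Taylor
bound for `t ↦ |t|^p` (Taylor when `2|ξ| < |S|`, a crude bound otherwise) gives pointwise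
`|S + ξ|^p ≤ |S|^p + p |S|^(p-2) S ξ + C (|S|^(p-2) ξ² + |ξ|^p)`.
Taking expectations, independence and `E ξ = 0` kill the linear term and factor the next one, and
Jensen bounds `E|S|^(p-2)` by `(E|S|^p)^((p-2)/p)`. The resulting recursion is closed by the
majorant `Φ(A, B) = ((C A)^(2/p) + (2C/p) B)^(p/2)` of `E|S|^p`, where `A = Σ E|ξ_k|^p` and
`B = Σ E ξ_k²`: convexity of `x ↦ x^(p/2)` (its tangent line, and the growth of its increments)
gives `Φ(A, B) + C (Φ(A, B)^((p-2)/p) b + a) ≤ Φ(A + a, B + b)`.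
Finally `Φ(A, B) ≤ 2^(p/2-1) (C + (2C/p)^(p/2)) max(A, B^(p/2))`.
-/

open MeasureTheory ProbabilityTheory Real

universe u

lemma rpow_sub_two_mul_self {p x : ℝ} (hp : 1 < p) (hx : 0 ≤ x) :
    x ^ (p - 2) * x = x ^ (p - 1) := by
  rw [← rpow_add_one' hx (by linarith)]
  ring_nf

lemma abs_rpow_add_sub_rpow_le {q x t : ℝ} (hq : 1 ≤ q) (hx : 0 < x) (ht : |t| ≤ x / 2) :
    |(x + t) ^ q - x ^ q| ≤ q * (3 * x / 2) ^ (q - 1) * |t| := by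
  have hderiv : ∀ s ∈ Set.Icc (x / 2) (3 * x / 2), HasDerivWithinAt (· ^ q) (q * s ^ (q - 1))
      (Set.Icc (x / 2) (3 * x / 2)) s := fun s hs =>
    (hasDerivAt_rpow_const (Or.inl (by linarith [hs.1]))).hasDerivWithinAt
  have hbound : ∀ s ∈ Set.Icc (x / 2) (3 * x / 2), ‖q * s ^ (q - 1)‖ ≤ q * (3 * x / 2) ^ (q - 1) :=
    fun s hs => by
      have hs0 : 0 ≤ s := by linarith [hs.1]
      rw [Real.norm_of_nonneg (by positivity)]
      gcongr
      exact hs.2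
  obtain ⟨ht₁, ht₂⟩ := abs_le.1 ht
  simpa [Real.norm_eq_abs] using Convex.norm_image_sub_le_of_norm_hasDerivWithin_le hderiv hbound
    (convex_Icc _ _) (x := x) (y := x + t) ⟨by linarith, by linarith⟩ ⟨by linarith, by linarith⟩

lemma rpow_add_le_of_abs_le_half {p x y : ℝ} (hp : 2 ≤ p) (hx : 0 < x) (hy : |y| ≤ x / 2) :
    (x + y) ^ p ≤ x ^ p + p * x ^ (p - 1) * y + p * (p - 1) * (3 * x / 2) ^ (p - 2) * y ^ 2 := by
  set K := p * (p - 1) * (3 * x / 2) ^ (p - 2)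
  have hderiv : ∀ t ∈ Set.Icc (-|y|) |y|, HasDerivWithinAt
      (fun t => (x + t) ^ p - p * x ^ (p - 1) * t) (p * ((x + t) ^ (p - 1) - x ^ (p - 1)))
      (Set.Icc (-|y|) |y|) t := fun t ht => by
    have hxt : x + t ≠ 0 := by linarith [abs_le.2 ht, neg_abs_le t]
    have := ((hasDerivAt_rpow_const (p := p) (Or.inl hxt)).comp_const_add x t).sub
      ((hasDerivAt_id t).const_mul (p * x ^ (p - 1)))
    exact (this.congr_deriv (by ring)).hasDerivWithinAt
  have hbound : ∀ t ∈ Set.Icc (-|y|) |y|, ‖p * ((x + t) ^ (p - 1) - x ^ (p - 1))‖ ≤ K * |y| :=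
    fun t ht => by
      have ht' : |t| ≤ |y| := abs_le.2 ht
      have hlip := abs_rpow_add_sub_rpow_le (q := p - 1) (by linarith) hx (ht'.trans hy)
      rw [show p - 1 - 1 = p - 2 by ring] at hlip
      rw [Real.norm_eq_abs, abs_mul, abs_of_nonneg (by linarith : 0 ≤ p)]
      have : 0 ≤ p - 1 := by linarith
      calc p * |(x + t) ^ (p - 1) - x ^ (p - 1)|
          ≤ p * ((p - 1) * (3 * x / 2) ^ (p - 2) * |y|) := by gcongr; exact hlip.trans (by gcongr)
        _ = K * |y| := by ring
  have hmvt := Convex.norm_image_sub_le_of_norm_hasDerivWithin_le hderiv hbound (convex_Icc _ _)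
    (x := 0) (y := y) ⟨by simp, by simp⟩ ⟨neg_abs_le y, le_abs_self y⟩
  simp only [add_zero, mul_zero, sub_zero, Real.norm_eq_abs] at hmvt
  rw [mul_assoc K, abs_mul_abs_self, ← sq] at hmvt
  have := (abs_le.1 hmvt).2
  linarith

lemma abs_add_rpow_le_of_two_mul_abs_lt {p x y : ℝ} (hp : 2 ≤ p) (hxy : 2 * |y| < |x|) :
    |x + y| ^ p ≤ |x| ^ p + p * |x| ^ (p - 2) * x * y
      + p * (p - 1) * (3 / 2) ^ (p - 2) * (|x| ^ (p - 2) * y ^ 2) := by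
  wlog hx : 0 < x generalizing x y
  · have hx' : 0 < -x := by
      have : x ≠ 0 := by rintro rfl; simp at hxy; linarith [abs_nonneg y]
      exact neg_pos.2 (lt_of_le_of_ne (not_lt.1 hx) this)
    have := this (x := -x) (y := -y) (by simpa) hx'
    rwa [← neg_add, abs_neg, abs_neg, neg_sq, show p * |x| ^ (p - 2) * -x * -y
      = p * |x| ^ (p - 2) * x * y by ring] at this
  have hy : |y| ≤ x / 2 := by rw [abs_of_pos hx] at hxy; linarith
  have hxy0 : 0 < x + y := by linarith [neg_abs_le y]
  rw [abs_of_pos hx, abs_of_pos hxy0, mul_assoc p, rpow_sub_two_mul_self (by linarith) hx.le]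
  have := rpow_add_le_of_abs_le_half hp hx hy
  rw [show 3 * x / 2 = 3 / 2 * x by ring, mul_rpow (by norm_num) hx.le] at this
  linarith

lemma abs_add_rpow_le_of_abs_le_two_mul {p x y : ℝ} (hp : 2 ≤ p) (hxy : |x| ≤ 2 * |y|) :
    |x + y| ^ p ≤ |x| ^ p + p * |x| ^ (p - 2) * x * y + (3 ^ p + p * 2 ^ (p - 1)) * |y| ^ p := by
  have hsum : |x + y| ^ p ≤ 3 ^ p * |y| ^ p := by
    rw [← mul_rpow (by norm_num) (abs_nonneg y)]
    gcongr
    linarith [abs_add_le x y]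
  have hlin : |p * |x| ^ (p - 2) * x * y| ≤ p * 2 ^ (p - 1) * |y| ^ p := by
    calc |p * |x| ^ (p - 2) * x * y| = p * |x| ^ (p - 1) * |y| := by
          rw [abs_mul, abs_mul, abs_mul, abs_of_nonneg (by linarith : 0 ≤ p),
            abs_of_nonneg (by positivity : 0 ≤ |x| ^ (p - 2)),
            ← rpow_sub_two_mul_self (by linarith) (abs_nonneg x)]
          ring
      _ ≤ p * (2 * |y|) ^ (p - 1) * |y| := by gcongr; linarith
      _ = p * 2 ^ (p - 1) * |y| ^ p := by
          rw [mul_rpow (by norm_num) (abs_nonneg y), mul_assoc, mul_assoc,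
            ← rpow_add_one' (abs_nonneg y) (by linarith)]
          ring_nf
  have : 0 ≤ |x| ^ p := by positivity
  linarith [neg_abs_le (p * |x| ^ (p - 2) * x * y)]

lemma exists_abs_add_rpow_le {p : ℝ} (hp : 2 ≤ p) :
    ∃ C, 0 ≤ C ∧ ∀ x y : ℝ, |x + y| ^ p ≤
      |x| ^ p + p * |x| ^ (p - 2) * x * y + C * (|x| ^ (p - 2) * y ^ 2 + |y| ^ p) := by
  have hC₁ : 0 ≤ p * (p - 1) * (3 / 2 : ℝ) ^ (p - 2) := by
    have : 0 ≤ p - 1 := by linarith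
    positivity
  have hC₂ : 0 ≤ 3 ^ p + p * (2 : ℝ) ^ (p - 1) := by
    have : 0 ≤ p := by linarith
    positivity
  refine ⟨p * (p - 1) * (3 / 2) ^ (p - 2) + (3 ^ p + p * 2 ^ (p - 1)), by positivity,
    fun x y => ?_⟩
  have hA : 0 ≤ |x| ^ (p - 2) * y ^ 2 := by positivity
  have hB : 0 ≤ |y| ^ p := by positivity
  rcases lt_or_ge (2 * |y|) |x| with hxy | hxy
  · linear_combination abs_add_rpow_le_of_two_mul_abs_lt hp hxy + mul_nonneg hC₁ hB
      + mul_nonneg hC₂ (add_nonneg hA hB)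
  · linear_combination abs_add_rpow_le_of_abs_le_two_mul hp hxy + mul_nonneg hC₂ hA
      + mul_nonneg hC₁ (add_nonneg hA hB)

lemma ConvexOn.map_sub_map_le_map_add_sub_map_add {s : Set ℝ} {f : ℝ → ℝ} (hf : ConvexOn ℝ s f)
    {a b w : ℝ} (ha : a ∈ s) (hbw : b + w ∈ s) (hab : a ≤ b) (hw : 0 ≤ w) :
    f b - f a ≤ f (b + w) - f (a + w) := by
  rcases (add_nonneg (sub_nonneg.2 hab) hw).eq_or_lt with hd | hd
  · obtain rfl : a = b := by linarith
    obtain rfl : w = 0 := by linarith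
    simp
  set d := b - a + w
  have hθ : w / d + (b - a) / d = 1 := by field_simp; ring
  have h₁ := hf.2 ha hbw (div_nonneg hw hd.le) (div_nonneg (sub_nonneg.2 hab) hd.le) hθ
  have h₂ := hf.2 ha hbw (div_nonneg (sub_nonneg.2 hab) hd.le) (div_nonneg hw hd.le)
    ((add_comm _ _).trans hθ)
  have e₁ : w / d * a + (b - a) / d * (b + w) = b := by field_simp; ring
  have e₂ : (b - a) / d * a + w / d * (b + w) = a + w := by field_simp; ring
  simp only [smul_eq_mul, e₁, e₂] at h₁ h₂
  linear_combination h₁ + h₂ + (f a + f (b + w)) * hθ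

lemma rpow_add_mul_rpow_sub_one_le {q u δ : ℝ} (hq : 1 ≤ q) (hu : 0 ≤ u) (hδ : 0 ≤ δ) :
    u ^ q + q * u ^ (q - 1) * δ ≤ (u + δ) ^ q := by
  rcases hδ.eq_or_lt with rfl | hδ
  · simp
  have := (convexOn_rpow hq).le_slope_of_hasDerivAt hu (by simp; positivity)
    (lt_add_of_pos_right u hδ) (hasDerivAt_rpow_const (Or.inr hq))
  rw [slope_def_field, add_sub_cancel_left, le_div_iff₀ hδ] at this
  linarith

noncomputable def rosenthalMajorant (p C A B : ℝ) : ℝ :=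
  ((C * A) ^ (2 / p) + 2 * C / p * B) ^ (p / 2)

lemma rpow_two_div_rpow_div_two {p x : ℝ} (hp : 0 < p) (hx : 0 ≤ x) :
    (x ^ (2 / p)) ^ (p / 2) = x := by
  rw [← inv_div 2 p, rpow_rpow_inv hx (by positivity)]

lemma add_le_rosenthalMajorant_add {p C A B a b X : ℝ} (hp : 2 ≤ p) (hC : 0 ≤ C) (hA : 0 ≤ A)
    (hB : 0 ≤ B) (ha : 0 ≤ a) (hb : 0 ≤ b) (hX : 0 ≤ X) (hXA : X ≤ rosenthalMajorant p C A B) :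
    X + C * (X ^ ((p - 2) / p) * b + a) ≤ rosenthalMajorant p C (A + a) (B + b) := by
  have hp₀ : 0 < p := by linarith
  have hq : 1 ≤ p / 2 := by linarith
  set s := (C * A) ^ (2 / p)
  set s' := (C * (A + a)) ^ (2 / p)
  set c := 2 * C / p
  set U := s + c * B
  have hc : 0 ≤ c := by positivity
  have hU : 0 ≤ U := by positivity
  have hXU : X ≤ U ^ (p / 2) := hXA
  have hpow : X ^ ((p - 2) / p) ≤ U ^ (p / 2 - 1) := calc
    X ^ ((p - 2) / p) ≤ (U ^ (p / 2)) ^ ((p - 2) / p) :=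
      rpow_le_rpow hX hXU (div_nonneg (by linarith) hp₀.le)
    _ = U ^ (p / 2 - 1) := by rw [← rpow_mul hU]; congr 1; field_simp
  have hss' : s ≤ s' := rpow_le_rpow (by positivity) (by nlinarith) (by positivity)
  have hshift := (convexOn_rpow hq).map_sub_map_le_map_add_sub_map_add
    (a := s) (b := s') (w := c * (B + b)) (Set.mem_Ici.2 (by positivity))
    (Set.mem_Ici.2 (by positivity)) hss' (by positivity)
  rw [rpow_two_div_rpow_div_two hp₀ (by positivity),
    rpow_two_div_rpow_div_two hp₀ (by positivity)] at hshift
  have htangent := rpow_add_mul_rpow_sub_one_le hq hU (mul_nonneg hc hb)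
  have hqc : p / 2 * c = C := by simp only [c]; field_simp
  calc X + C * (X ^ ((p - 2) / p) * b + a)
      ≤ U ^ (p / 2) + C * (U ^ (p / 2 - 1) * b + a) := by gcongr
    _ = U ^ (p / 2) + p / 2 * U ^ (p / 2 - 1) * (c * b) + C * a := by rw [← hqc]; ring
    _ ≤ (U + c * b) ^ (p / 2) + C * a := by gcongr
    _ ≤ rosenthalMajorant p C (A + a) (B + b) := by
      unfold rosenthalMajorant
      rw [show U + c * b = s + c * (B + b) by ring]
      linarith

lemma rosenthalMajorant_le {p C A B : ℝ} (hp : 2 ≤ p) (hC : 0 ≤ C) (hA : 0 ≤ A) (hB : 0 ≤ B) :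
    rosenthalMajorant p C A B ≤
      2 ^ (p / 2 - 1) * (C + (2 * C / p) ^ (p / 2)) * max A (B ^ (p / 2)) := by
  have hp₀ : 0 < p := by linarith
  have hmean : ((C * A) ^ (2 / p) + 2 * C / p * B) ^ (p / 2)
      ≤ 2 ^ (p / 2 - 1) * (((C * A) ^ (2 / p)) ^ (p / 2) + (2 * C / p * B) ^ (p / 2)) := by
    have := NNReal.rpow_add_le_mul_rpow_add_rpow ⟨(C * A) ^ (2 / p), by positivity⟩
      ⟨2 * C / p * B, by positivity⟩ (p := p / 2) (by linarith)
    exact_mod_cast this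
  rw [rpow_two_div_rpow_div_two hp₀ (by positivity), mul_rpow (by positivity) hB] at hmean
  have hmax : C * A + (2 * C / p) ^ (p / 2) * B ^ (p / 2)
      ≤ (C + (2 * C / p) ^ (p / 2)) * max A (B ^ (p / 2)) := by
    rw [add_mul]
    gcongr
    exacts [le_max_left _ _, le_max_right _ _]
  unfold rosenthalMajorant
  calc _ ≤ _ := hmean
    _ ≤ _ := by rw [mul_assoc]; gcongr

section
variable {Ω : Type*} [MeasurableSpace Ω] {P : Measure Ω}

lemma MeasureTheory.MemLp.integrable_abs_rpow [IsFiniteMeasure P] {f : Ω → ℝ} {p q : ℝ}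
    (hf : MemLp f (ENNReal.ofReal p) P) (hq : 0 ≤ q) (hqp : q ≤ p) :
    Integrable (fun ω => |f ω| ^ q) P := by
  simpa [ENNReal.toReal_ofReal hq] using
    (hf.mono_exponent (ENNReal.ofReal_le_ofReal hqp)).integrable_norm_rpow'

lemma integral_abs_rpow_le_rpow_integral [IsProbabilityMeasure P] {f : Ω → ℝ} {p q : ℝ}
    (hf : MemLp f (ENNReal.ofReal p) P) (hp : 0 < p) (hq : 0 ≤ q) (hqp : q ≤ p) :
    ∫ ω, |f ω| ^ q ∂P ≤ (∫ ω, |f ω| ^ p ∂P) ^ (q / p) := by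
  have hcomp : ∀ ω, (|f ω| ^ p) ^ (q / p) = |f ω| ^ q := fun ω => by
    rw [← rpow_mul (abs_nonneg _), mul_div_cancel₀ _ hp.ne']
  have := (concaveOn_rpow (div_nonneg hq hp.le) ((div_le_one hp).2 hqp)).le_map_integral
    (continuous_rpow_const (div_nonneg hq hp.le)).continuousOn isClosed_Ici
    (ae_of_all _ fun ω => Set.mem_Ici.2 (by positivity)) (hf.integrable_abs_rpow hp.le le_rfl)
    (by simpa [Function.comp_def, hcomp] using hf.integrable_abs_rpow hq hqp)
  simpa only [hcomp] using this

lemma integral_abs_add_rpow_le [IsProbabilityMeasure P] {p C : ℝ} (hp : 2 ≤ p)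
    (hC : ∀ x y : ℝ, |x + y| ^ p ≤
      |x| ^ p + p * |x| ^ (p - 2) * x * y + C * (|x| ^ (p - 2) * y ^ 2 + |y| ^ p))
    {S ξ : Ω → ℝ} (hS : MemLp S (ENNReal.ofReal p) P) (hξ : MemLp ξ (ENNReal.ofReal p) P)
    (hind : IndepFun S ξ P) (hmean : ∫ ω, ξ ω ∂P = 0) :
    ∫ ω, |S ω + ξ ω| ^ p ∂P ≤ ∫ ω, |S ω| ^ p ∂P
      + C * ((∫ ω, |S ω| ^ (p - 2) ∂P) * (∫ ω, ξ ω ^ 2 ∂P) + ∫ ω, |ξ ω| ^ p ∂P) := by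
  have hp₀ : 0 ≤ p := by linarith
  have hp₂ : 0 ≤ p - 2 := by linarith
  set g₁ : ℝ → ℝ := fun t => p * |t| ^ (p - 2) * t
  set g₂ : ℝ → ℝ := fun t => |t| ^ (p - 2)
  have hg₂ : Continuous g₂ := (continuous_rpow_const hp₂).comp continuous_abs
  have hg₁ : Continuous g₁ := (continuous_const.mul hg₂).mul continuous_id
  have hsq : Continuous fun t : ℝ => t ^ 2 := continuous_pow 2
  have iξ : Integrable ξ P := hξ.integrable (by simpa using hp.trans' one_le_two)
  have iξ2 : Integrable (fun ω => ξ ω ^ 2) P := by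
    simpa [sq_abs] using hξ.integrable_abs_rpow (q := 2) zero_le_two hp
  have ig₂ : Integrable (fun ω => g₂ (S ω)) P := hS.integrable_abs_rpow hp₂ (by linarith)
  have ig₁ : Integrable (fun ω => g₁ (S ω)) P := by
    refine ((hS.integrable_abs_rpow (q := p - 1) (by linarith) (by linarith)).const_mul p).mono'
      (hg₁.comp_aestronglyMeasurable hS.1) (ae_of_all _ fun ω => ?_)
    rw [Real.norm_eq_abs, abs_mul, abs_mul, abs_of_nonneg hp₀, abs_of_nonneg (by positivity),
      mul_assoc, rpow_sub_two_mul_self (by linarith) (abs_nonneg _)]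
  have hind₁ := hind.comp hg₁.measurable measurable_id
  have hind₂ := hind.comp hg₂.measurable hsq.measurable
  have hmid : ∫ ω, g₁ (S ω) * ξ ω ∂P = 0 := by
    simpa [hmean] using hind.integral_fun_comp_mul_comp (f := g₁) (g := id) hS.1.aemeasurable
      hξ.1.aemeasurable hg₁.aestronglyMeasurable aestronglyMeasurable_id
  have hlast : ∫ ω, g₂ (S ω) * ξ ω ^ 2 ∂P = (∫ ω, g₂ (S ω) ∂P) * ∫ ω, ξ ω ^ 2 ∂P :=
    hind.integral_fun_comp_mul_comp hS.1.aemeasurable hξ.1.aemeasurable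
      hg₂.aestronglyMeasurable hsq.aestronglyMeasurable
  have i₁ : Integrable (fun ω => g₁ (S ω) * ξ ω) P := hind₁.integrable_mul ig₁ iξ
  have i₂ : Integrable (fun ω => g₂ (S ω) * ξ ω ^ 2) P := hind₂.integrable_mul ig₂ iξ2
  have iSp := hS.integrable_abs_rpow hp₀ le_rfl
  have iξp := hξ.integrable_abs_rpow hp₀ le_rfl
  have iA : Integrable (fun ω => |S ω| ^ p + g₁ (S ω) * ξ ω) P := iSp.add i₁
  have iB : Integrable (fun ω => C * (g₂ (S ω) * ξ ω ^ 2 + |ξ ω| ^ p)) P :=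
    (i₂.add iξp).const_mul C
  calc ∫ ω, |S ω + ξ ω| ^ p ∂P
      ≤ ∫ ω, (|S ω| ^ p + g₁ (S ω) * ξ ω + C * (g₂ (S ω) * ξ ω ^ 2 + |ξ ω| ^ p)) ∂P :=
        integral_mono ((hS.add hξ).integrable_abs_rpow hp₀ le_rfl) (iA.add iB)
          fun ω => hC (S ω) (ξ ω)
    _ = _ := by
      rw [integral_add iA iB, integral_add iSp i₁, integral_const_mul, integral_add i₂ iξp, hmid,
        hlast, add_zero]

lemma integral_abs_sum_rpow_le_rosenthalMajorant [IsProbabilityMeasure P] {p C : ℝ} (hp : 2 ≤ p)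
    (hC₀ : 0 ≤ C) (hC : ∀ x y : ℝ, |x + y| ^ p ≤
      |x| ^ p + p * |x| ^ (p - 2) * x * y + C * (|x| ^ (p - 2) * y ^ 2 + |y| ^ p))
    {ι : Type*} {ξ : ι → Ω → ℝ} (hind : iIndepFun ξ P)
    (hmem : ∀ k, MemLp (ξ k) (ENNReal.ofReal p) P) (hmean : ∀ k, ∫ ω, ξ k ω ∂P = 0)
    (s : Finset ι) :
    ∫ ω, |∑ k ∈ s, ξ k ω| ^ p ∂P ≤
      rosenthalMajorant p C (∑ k ∈ s, ∫ ω, |ξ k ω| ^ p ∂P) (∑ k ∈ s, ∫ ω, ξ k ω ^ 2 ∂P) := by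
  classical
  have hp₀ : 0 < p := by linarith
  induction s using Finset.induction_on with
  | empty => simp [zero_rpow hp₀.ne', rosenthalMajorant]; positivity
  | insert j s hj ih =>
    set S : Ω → ℝ := fun ω => ∑ k ∈ s, ξ k ω
    have hS : MemLp S (ENNReal.ofReal p) P := memLp_finsetSum s fun k _ => hmem k
    have hindS : IndepFun S (ξ j) P := by
      simpa [Finset.sum_fn] using
        hind.indepFun_finsetSum_of_notMem₀ (fun k => (hmem k).1.aemeasurable) hj
    have hstep := integral_abs_add_rpow_le hp hC hS (hmem j) hindS (hmean j)
    have hjensen :=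
      integral_abs_rpow_le_rpow_integral hS hp₀ (by linarith) (by linarith : p - 2 ≤ p)
    simp only [Finset.sum_insert hj]
    rw [add_comm (∫ ω, |ξ j ω| ^ p ∂P), add_comm (∫ ω, ξ j ω ^ 2 ∂P)]
    refine le_trans ?_ (add_le_rosenthalMajorant_add hp hC₀ ?_ ?_ ?_ ?_ ?_ ih)
    · simp only [add_comm (ξ j _)]
      refine hstep.trans ?_
      gcongr
    all_goals positivity
end

/-- Rosenthal's inequality: for `p ≥ 2` there is a constant `N`, depending only on `p`,
such that for every probability space `(Ω, P)` and every finite family `ξ_1, …, ξ_n` of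
independent, centered real random variables with `E|ξ_k|^p < ∞`,
`E|ξ_1 + ⋯ + ξ_n|^p ≤ N · max(Σ_k E|ξ_k|^p, (Σ_k E ξ_k²)^{p/2})`. -/
theorem rosenthal_inequality (p : ℝ) (hp : 2 ≤ p) :
    ∃ N : ℝ, ∀ (Ω : Type u) [MeasurableSpace Ω], ∀ (P : Measure Ω) [IsProbabilityMeasure P],
      ∀ (n : ℕ) (ξ : Fin n → Ω → ℝ),
        iIndepFun ξ P →
        (∀ k, MemLp (ξ k) (ENNReal.ofReal p) P) →
        (∀ k, ∫ ω, ξ k ω ∂P = 0) →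
        ∫ ω, |∑ k, ξ k ω| ^ p ∂P ≤
          N * max (∑ k, ∫ ω, |ξ k ω| ^ p ∂P)
            ((∑ k, ∫ ω, (ξ k ω) ^ 2 ∂P) ^ (p / 2)) := by
  obtain ⟨C, hC₀, hC⟩ := exists_abs_add_rpow_le hp
  refine ⟨2 ^ (p / 2 - 1) * (C + (2 * C / p) ^ (p / 2)),
    fun Ω _ P _ n ξ hind hmem hmean => ?_⟩
  have hA : 0 ≤ ∑ k, ∫ ω, |ξ k ω| ^ p ∂P :=
    Finset.sum_nonneg fun k _ => integral_nonneg fun ω => by positivity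
  have hB : 0 ≤ ∑ k, ∫ ω, ξ k ω ^ 2 ∂P :=
    Finset.sum_nonneg fun k _ => integral_nonneg fun ω => by positivity
  exact (integral_abs_sum_rpow_le_rosenthalMajorant hp hC₀ hC hind hmem hmean Finset.univ).trans
    (rosenthalMajorant_le hp hC₀ hA hB)
end
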